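/- Let Θ and X be finite nonempty sets, u : X × Θ → ℝ, and let x : Θ → Δ(X) be a strictly cyclically monotone social choice function. Fix a quota q ∈ Δ(Θ), an integer K ≥ 1, and a type vector θ = (θ^1,…,θ^K) ∈ Θ^K. Then EVERY feasible report vector r = (r^1,…,r^K) at quota q that maximizes the payoff (1/K)·Σ_k ū(x(r^k),θ^k) among all feasible report vectors at quota q satisfies (1/K)·Σ_{k=1}^K ‖x(r^k) − x(θ^k)‖ ≤ (|Θ| − 1)·‖q − marg θ‖. -/

import Mathlib

open Finset

/-- `p` is a probability vector on the finite set `Z`. -/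
def IsProbVec {Z : Type*} [Fintype Z] (p : Z → ℝ) : Prop :=
  (∀ z, 0 ≤ p z) ∧ ∑ z, p z = 1

/-- Total variation distance `‖p − q‖ = (1/2)·Σ_z |p z − q z|`. -/
noncomputable def tv {Z : Type*} [Fintype Z] (p q : Z → ℝ) : ℝ :=
  (∑ z, |p z - q z|) / 2

/-- Lifted utility: `ū(μ,θ) = Σ_a μ(a)·u(a,θ)` for a lottery `μ ∈ Δ(X)`. -/
noncomputable def ubar {Θ X : Type*} [Fintype X]
    (u : X × Θ → ℝ) (μ : X → ℝ) (θ : Θ) : ℝ :=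
  ∑ a, μ a * u (a, θ)

/-- Linear extension of the social choice function `x : Θ → Δ(X)` to `Δ(Θ)`:
`x(r) = Σ_{θ'} r(θ')·x(θ')`. -/
noncomputable def liftSCF {Θ X : Type*} [Fintype Θ]
    (x : Θ → X → ℝ) (r : Θ → ℝ) : X → ℝ :=
  fun a => ∑ θ', r θ' * x θ' a

/-- `x : Θ → Δ(X)` is cyclically monotone for the utility `u`. -/
def CyclMonoSCF {Θ X : Type*} [Fintype X] (u : X × Θ → ℝ) (x : Θ → X → ℝ) : Prop :=
  ∀ J : ℕ, ∀ θs : Fin (J + 2) → Θ, Function.Injective θs →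
    ∑ j, ubar u (x (θs (j + 1))) (θs j) ≤ ∑ j, ubar u (x (θs j)) (θs j)

/-- `r = (r^1,…,r^K)` is a feasible report vector at quota `q`:
each `r^k ∈ Δ(Θ)` and `(1/K)·Σ_k r^k = q`. -/
def Feasible {Θ : Type*} [Fintype Θ] (K : ℕ) (q : Θ → ℝ)
    (r : Fin K → Θ → ℝ) : Prop :=
  (∀ k, IsProbVec (r k)) ∧ ∀ θ', (∑ k, r k θ') / K = q θ'

/-- Payoff of the report vector `r` at the type vector `θv`:
`(1/K)·Σ_k ū(x(r^k),θ^k)`. -/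
noncomputable def payoff {Θ X : Type*} [Fintype Θ] [Fintype X]
    (u : X × Θ → ℝ) (x : Θ → X → ℝ) (K : ℕ)
    (θv : Fin K → Θ) (r : Fin K → Θ → ℝ) : ℝ :=
  (∑ k, ubar u (liftSCF x (r k)) (θv k)) / K

/-- Empirical distribution of a type vector: `(marg θ)(θ') = |{k : θ^k = θ'}|/K`. -/
noncomputable def marg {Θ : Type*} [Fintype Θ] [DecidableEq Θ] (K : ℕ)
    (θv : Fin K → Θ) : Θ → ℝ :=
  fun θ' => ((Finset.univ.filter (fun k => θv k = θ')).card : ℝ) / K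

/-- `x : Θ → Δ(X)` is strictly cyclically monotone for the utility `u`: for
every cycle of types whose lotteries are pairwise distinct, the cyclic
inequality is strict. -/
def StrictCyclMonoSCF {Θ X : Type*} [Fintype X]
    (u : X × Θ → ℝ) (x : Θ → X → ℝ) : Prop :=
  ∀ J : ℕ, ∀ θs : Fin (J + 2) → Θ,
    (∀ j j' : Fin (J + 2), j ≠ j' → x (θs j) ≠ x (θs j')) →
    ∑ j, ubar u (x (θs (j + 1))) (θs j) < ∑ j, ubar u (x (θs j)) (θs j)

/-!
Aggregate the reports into a flow between the lotteries in the range of `x`: `F b a` is the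
report mass of agents whose true type yields the lottery `b` and whose report yields `a ≠ b`.
Since lotteries are at total variation distance at most `1`, the total flow bounds the average
decision error. Optimality and strict cyclic monotonicity make the flow acyclic: along a cycle
of positive flow, every agent on the cycle can shift a little mass back to a report yielding
its truthful lottery without breaking the quota, and strict cyclic monotonicity says that this
strictly raises the payoff. An acyclic flow on `n` vertices carries at most `n - 1` times its
positive net outflow (peel off a sink), and the net outflow at a lottery is the difference of
the empirical and the quota mass of its fibre, whose positive parts add up to at most
`‖q − marg θ‖`.
-/

lemma exists_mem_periodicPts {β : Type*} [Finite β] [Nonempty β] (g : β → β) :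
    ∃ y, y ∈ Function.periodicPts g := by
  obtain ⟨m, n, hne, heq⟩ :=
    Finite.exists_ne_map_eq_of_infinite fun n : ℕ => g^[n] (Classical.arbitrary β)
  wlog hmn : m < n generalizing m n
  · exact this n m hne.symm heq.symm (by omega)
  refine ⟨g^[m] (Classical.arbitrary β), Function.mk_mem_periodicPts (n := n - m) (by omega) ?_⟩
  change g^[n - m] (g^[m] _) = _
  rw [← Function.iterate_add_apply, Nat.sub_add_cancel hmn.le]
  exact heq.symm

lemma sum_fiberwise_of_maps_to_eq {ι κ M : Type*} [AddCommMonoid M] [DecidableEq κ]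
    {s : Finset ι} {t : Finset κ} {g : ι → κ} (h : ∀ i ∈ s, g i ∈ t) (f : κ → ι → M) :
    ∑ j ∈ t, ∑ i ∈ s with g i = j, f j i = ∑ i ∈ s, f (g i) i := by
  rw [← sum_fiberwise_of_maps_to h]
  exact sum_congr rfl fun j _ => sum_congr rfl fun i hi => by rw [(mem_filter.1 hi).2]

section Flow

variable {α : Type*} (F : α → α → ℝ)

def IsAcyclicFlow : Prop :=
  ∀ (J : ℕ) (c : Fin (J + 2) → α), Function.Injective c → ∃ j, F (c j) (c (j + 1)) ≤ 0

def netOutflow (S : Finset α) (a : α) : ℝ :=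
  ∑ b ∈ S, F a b - ∑ b ∈ S, F b a

variable {F}

lemma sum_netOutflow (S : Finset α) : ∑ a ∈ S, netOutflow F S a = 0 := by
  simp only [netOutflow, sum_sub_distrib]
  rw [sum_comm, sub_self]

lemma IsAcyclicFlow.exists_sink (hF : IsAcyclicFlow F) (hdiag : ∀ a, F a a ≤ 0)
    {S : Finset α} (hS : S.Nonempty) : ∃ m ∈ S, ∀ b ∈ S, F m b ≤ 0 := by
  by_contra! hsucc
  choose s hsS hs using hsucc
  let g : S → S := fun m => ⟨s m m.2, hsS m m.2⟩
  have : Nonempty S := hS.to_subtype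
  obtain ⟨y, hy⟩ := exists_mem_periodicPts g
  have hgy : g y ≠ y := fun h => by
    have := hs y y.2
    rw [show s y y.2 = y from congrArg Subtype.val h] at this
    exact (hdiag y).not_gt this
  obtain ⟨J, hJ⟩ : ∃ J, Function.minimalPeriod g y = J + 2 := by
    have hpos := Function.minimalPeriod_pos_of_mem_periodicPts hy
    have hne1 : Function.minimalPeriod g y ≠ 1 := fun h =>
      hgy (Function.minimalPeriod_eq_one_iff_isFixedPt.mp h)
    exact ⟨Function.minimalPeriod g y - 2, by omega⟩
  have hinj : Function.Injective fun j : Fin (J + 2) => (g^[j] y : α) := fun i j hij =>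
    Fin.ext <| Function.iterate_injOn_Iio_minimalPeriod (by simp [hJ]) (by simp [hJ])
      (Subtype.val_injective hij)
  obtain ⟨j, hj⟩ := hF J _ hinj
  have hnext : g^[((j + 1 : Fin (J + 2)) : ℕ)] y = g (g^[j] y) := by
    have hmod := Function.iterate_mod_minimalPeriod_eq (f := g) (x := y) (n := j + 1)
    rw [hJ] at hmod
    rw [Fin.val_add, Fin.val_one, hmod, Function.iterate_succ_apply']
  rw [hnext] at hj
  exact hj.not_gt (hs _ _)

lemma IsAcyclicFlow.sum_sum_le_card_sub_one_mul [DecidableEq α] (hF : IsAcyclicFlow F)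
    (hF0 : ∀ a b, 0 ≤ F a b) (hdiag : ∀ a, F a a = 0) (S : Finset α) :
    ∑ a ∈ S, ∑ b ∈ S, F a b ≤ (#S - 1 : ℝ) * ∑ a ∈ S, max (netOutflow F S a) 0 := by
  induction S using strongInduction with
  | H S ih =>
  rcases S.eq_empty_or_nonempty with rfl | hS
  · simp
  obtain ⟨m, hmS, hm⟩ := hF.exists_sink (fun a => (hdiag a).le) hS
  have hout : ∀ b ∈ S, F m b = 0 := fun b hb => le_antisymm (hm b hb) (hF0 m b)
  set S' := S.erase m
  rcases S'.eq_empty_or_nonempty with hS' | hS'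
  · rw [erase_eq_empty_iff] at hS'
    obtain rfl | rfl := hS'
    · simp at hmS
    · simp [hdiag]
  have hsplit (f : α → ℝ) : ∑ a ∈ S, f a = ∑ a ∈ S', f a + f m :=
    (sum_erase_add S f hmS).symm
  have hnet : ∀ a ∈ S', netOutflow F S' a ≤ netOutflow F S a := by
    intro a ha
    simp only [netOutflow, hsplit (F a), hsplit (F · a), hout a (mem_of_mem_erase ha)]
    linarith [hF0 a m]
  have hin : ∑ a ∈ S', F a m = ∑ a ∈ S', netOutflow F S a := by
    have h0 := sum_netOutflow (F := F) S
    rw [hsplit, netOutflow, sum_eq_zero hout, hsplit (F · m), hdiag] at h0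
    linarith
  have hD : ∑ a ∈ S', max (netOutflow F S a) 0 ≤ ∑ a ∈ S, max (netOutflow F S a) 0 := by
    rw [hsplit (fun a => max (netOutflow F S a) 0)]
    linarith [le_max_right (netOutflow F S m) 0]
  have hcard : (#S' : ℝ) = #S - 1 := by
    rw [card_erase_of_mem hmS, Nat.cast_sub (card_pos.mpr hS), Nat.cast_one]
  have hcard' : (1 : ℝ) ≤ #S' := by exact_mod_cast card_pos.mpr hS'
  have hD' : ∑ a ∈ S', max (netOutflow F S' a) 0 ≤ ∑ a ∈ S, max (netOutflow F S a) 0 :=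
    (sum_le_sum fun a ha => max_le_max (hnet a ha) le_rfl).trans hD
  have hinD : ∑ a ∈ S', F a m ≤ ∑ a ∈ S, max (netOutflow F S a) 0 :=
    hin ▸ (sum_le_sum fun a _ => le_max_left _ _).trans hD
  have hsink : ∑ a ∈ S, ∑ b ∈ S, F a b = ∑ a ∈ S', ∑ b ∈ S', F a b + ∑ a ∈ S', F a m := by
    rw [hsplit, sum_eq_zero hout, add_zero]
    simp only [hsplit (F _), sum_add_distrib]
  have hih := ih S' (erase_ssubset hmS)
  rw [hsink, ← hcard]
  nlinarith

end Flow

section TotalVariation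

variable {Z : Type*} [Fintype Z]

lemma tv_comm (p q : Z → ℝ) : tv p q = tv q p := by
  simp only [tv, abs_sub_comm]

lemma tv_self (p : Z → ℝ) : tv p p = 0 := by
  simp [tv]

lemma tv_le_one {p q : Z → ℝ} (hp : IsProbVec p) (hq : IsProbVec q) : tv p q ≤ 1 := by
  have h : ∑ z, |p z - q z| ≤ ∑ z, (p z + q z) :=
    sum_le_sum fun z _ => abs_sub_le_iff.mpr ⟨by linarith [hq.1 z], by linarith [hp.1 z]⟩
  rw [sum_add_distrib, hp.2, hq.2] at h
  rw [tv]
  linarith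

lemma sum_image_max_sum_fiber_sub_le_tv {Θ β : Type*} [Fintype Θ] [DecidableEq β] (f : Θ → β)
    {p q : Θ → ℝ} (hpq : ∑ t, p t = ∑ t, q t) :
    ∑ b ∈ univ.image f, max (∑ t with f t = b, (p t - q t)) 0 ≤ tv p q := by
  have hmaps : ∀ t ∈ univ, f t ∈ univ.image f := fun t _ => mem_image_of_mem f (mem_univ t)
  have hsum : ∑ b ∈ univ.image f, ∑ t with f t = b, (p t - q t) = 0 := by
    rw [sum_fiberwise_of_maps_to hmaps, sum_sub_distrib, hpq, sub_self]
  have habs : ∑ b ∈ univ.image f, |∑ t with f t = b, (p t - q t)| ≤ ∑ t, |p t - q t| :=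
    (sum_le_sum fun b _ => abs_sum_le_sum_abs _ _).trans_eq (sum_fiberwise_of_maps_to hmaps _)
  have hmax (y : ℝ) : max y 0 = (y + |y|) / 2 := by
    rcases le_total y 0 with h | h
    · rw [max_eq_right h, abs_of_nonpos h]; ring
    · rw [max_eq_left h, abs_of_nonneg h]; ring
  simp only [hmax, ← sum_div, sum_add_distrib, hsum, tv]
  linarith

end TotalVariation

section Lift

variable {Θ X : Type*} [Fintype Θ] [Fintype X]

lemma ubar_liftSCF (u : X × Θ → ℝ) (x : Θ → X → ℝ) (p : Θ → ℝ) (θ : Θ) :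
    ubar u (liftSCF x p) θ = ∑ s, p s * ubar u (x s) θ := by
  simp only [ubar, liftSCF, sum_mul, mul_sum]
  rw [sum_comm]
  simp only [mul_assoc]

lemma tv_liftSCF_le {x : Θ → X → ℝ} {p : Θ → ℝ} (hp : IsProbVec p) (μ : X → ℝ) :
    tv (liftSCF x p) μ ≤ ∑ s, p s * tv (x s) μ := by
  have hdiff (a : X) : liftSCF x p a - μ a = ∑ s, p s * (x s a - μ a) := by
    simp only [liftSCF, mul_sub, sum_sub_distrib, ← sum_mul, hp.2, one_mul]
  have habs (a : X) : |liftSCF x p a - μ a| ≤ ∑ s, p s * |x s a - μ a| := by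
    rw [hdiff]
    refine (abs_sum_le_sum_abs _ _).trans_eq (sum_congr rfl fun s _ => ?_)
    rw [abs_mul, abs_of_nonneg (hp.1 s)]
  calc tv (liftSCF x p) μ ≤ (∑ a, ∑ s, p s * |x s a - μ a|) / 2 := by
        rw [tv]; gcongr with a; exact habs a
    _ = ∑ s, p s * tv (x s) μ := by
        rw [sum_comm, sum_div]
        exact sum_congr rfl fun s _ => by rw [tv, ← mul_sum, mul_div_assoc]

lemma tv_liftSCF_le_sum_ne {x : Θ → X → ℝ} (hx : ∀ θ, IsProbVec (x θ))
    {p : Θ → ℝ} (hp : IsProbVec p) (t : Θ) :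
    tv (liftSCF x p) (x t) ≤ ∑ s with x s ≠ x t, p s := by
  refine (tv_liftSCF_le hp (x t)).trans ?_
  rw [sum_filter]
  gcongr with s
  split_ifs with h
  · exact mul_le_of_le_one_right (hp.1 s) (tv_le_one (hx s) (hx t))
  · rw [not_not.mp h, tv_self, mul_zero]

end Lift

section PushFlow

variable {Θ β : Type*} [Fintype Θ] [DecidableEq β] (f : Θ → β) (π : Θ → Θ → ℝ)

def pushFlow (b a : β) : ℝ :=
  if b = a then 0 else ∑ t with f t = b, ∑ s with f s = a, π t s

variable {f π}

lemma pushFlow_self (b : β) : pushFlow f π b b = 0 := if_pos rfl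

lemma pushFlow_nonneg (hπ : ∀ t s, 0 ≤ π t s) (b a : β) : 0 ≤ pushFlow f π b a := by
  unfold pushFlow
  split_ifs
  exacts [le_rfl, sum_nonneg fun t _ => sum_nonneg fun s _ => hπ t s]

lemma exists_pos_of_pushFlow_pos {b a : β} (h : 0 < pushFlow f π b a) :
    ∃ t s, f t = b ∧ f s = a ∧ 0 < π t s := by
  unfold pushFlow at h
  split_ifs at h
  · exact absurd h (lt_irrefl 0)
  obtain ⟨t, ht, hts⟩ := exists_lt_of_sum_lt (sum_const_zero.trans_lt h)
  obtain ⟨s, hs, hπ⟩ := exists_lt_of_sum_lt (sum_const_zero.trans_lt hts)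
  exact ⟨t, s, (mem_filter.1 ht).2, (mem_filter.1 hs).2, hπ⟩

lemma pushFlow_eq_sum_sum (b a : β) :
    pushFlow f π b a = ∑ t with f t = b, ∑ s with f s = a, if b = a then 0 else π t s := by
  unfold pushFlow
  split_ifs <;> simp

lemma sum_pushFlow_right (b : β) :
    ∑ a ∈ univ.image f, pushFlow f π b a = ∑ t with f t = b, ∑ s with f s ≠ b, π t s := by
  simp only [pushFlow_eq_sum_sum]
  rw [sum_comm]
  refine sum_congr rfl fun t _ => ?_
  rw [sum_fiberwise_of_maps_to_eq (by simp) (fun a s => if b = a then 0 else π t s), sum_filter]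
  simp only [eq_comm, ite_not]

lemma sum_pushFlow_left (a : β) :
    ∑ b ∈ univ.image f, pushFlow f π b a = ∑ t with f t ≠ a, ∑ s with f s = a, π t s := by
  simp only [pushFlow_eq_sum_sum]
  rw [sum_fiberwise_of_maps_to_eq (by simp)
    (fun b t => ∑ s with f s = a, if b = a then 0 else π t s), sum_filter]
  refine sum_congr rfl fun t _ => ?_
  by_cases h : f t = a <;> simp [h]

lemma sum_sum_pushFlow :
    ∑ b ∈ univ.image f, ∑ a ∈ univ.image f, pushFlow f π b a =
      ∑ t, ∑ s with f s ≠ f t, π t s := by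
  simp only [sum_pushFlow_right]
  exact sum_fiberwise_of_maps_to_eq (by simp) (fun b t => ∑ s with f s ≠ b, π t s)

lemma netOutflow_pushFlow (b : β) :
    netOutflow (pushFlow f π) (univ.image f) b =
      ∑ t with f t = b, (∑ s, π t s - ∑ s, π s t) := by
  have hrow := fun t => sum_filter_add_sum_filter_not univ (fun s => f s = b) (π t)
  have hcol := sum_filter_add_sum_filter_not univ (fun t => f t = b)
    (fun t => ∑ s with f s = b, π t s)
  have hswap : ∑ t, ∑ s with f s = b, π t s = ∑ t with f t = b, ∑ s, π s t := by
    rw [sum_comm' (t' := univ.filter (f · = b)) (s' := fun _ => univ)]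
    simp
  rw [netOutflow, sum_pushFlow_right, sum_pushFlow_left, sum_sub_distrib, ← hswap, ← hcol]
  simp only [← hrow, sum_add_distrib]
  ring

end PushFlow

section Reports

variable {Θ : Type*} [DecidableEq Θ] {K : ℕ} {θv : Fin K → Θ} {r : Fin K → Θ → ℝ}

variable (K θv r) in
/-- `reportPlan K θv r t s` is the share of the `K` agents' report mass placed on `s` by agents
of true type `t`: a plan with marginals `marg K θv` and `q`. -/
noncomputable def reportPlan (t s : Θ) : ℝ :=
  (∑ k with θv k = t, r k s) / K

lemma reportPlan_nonneg [Fintype Θ] (hr : ∀ k, IsProbVec (r k)) (t s : Θ) :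
    0 ≤ reportPlan K θv r t s :=
  div_nonneg (sum_nonneg fun k _ => (hr k).1 s) K.cast_nonneg

lemma exists_pos_of_reportPlan_pos {t s : Θ} (h : 0 < reportPlan K θv r t s) :
    ∃ k, θv k = t ∧ 0 < r k s := by
  by_contra! hk
  refine h.not_ge (div_nonpos_of_nonpos_of_nonneg (sum_nonpos fun k hk' => ?_) K.cast_nonneg)
  exact hk k (mem_filter.1 hk').2

lemma sum_reportPlan_right [Fintype Θ] (hr : ∀ k, IsProbVec (r k)) (t : Θ) :
    ∑ s, reportPlan K θv r t s = marg K θv t := by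
  simp only [reportPlan, ← sum_div, marg]
  rw [sum_comm]
  simp [(hr _).2]

lemma sum_reportPlan_left [Fintype Θ] {q : Θ → ℝ} (hr : Feasible K q r) (s : Θ) :
    ∑ t, reportPlan K θv r t s = q s := by
  simp only [← hr.2 s, reportPlan, ← sum_div, sum_fiberwise]

lemma sum_sum_filter_reportPlan [Fintype Θ] (P : Θ → Θ → Prop) [∀ t s, Decidable (P t s)] :
    ∑ t, ∑ s with P t s, reportPlan K θv r t s = (∑ k, ∑ s with P (θv k) s, r k s) / K := by
  simp only [reportPlan, ← sum_div]
  rw [← sum_fiberwise_of_maps_to_eq (fun k _ => mem_univ (θv k))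
    fun t k => ∑ s with P t s, r k s]
  exact congrArg (· / (K : ℝ)) (sum_congr rfl fun t _ => sum_comm)

end Reports

section CycleShift

variable {ι Θ : Type*} [DecidableEq ι] [DecidableEq Θ] {n : ℕ} [NeZero n]
  (k : Fin n → ι) (w : Fin n → Θ)

/-- Agent `k j` moves one unit of report mass from `w j` to `w (j - 1)`, for every `j`. -/
def cycleShift (i : ι) (s : Θ) : ℝ :=
  ∑ j, if k j = i then (if w (j - 1) = s then 1 else 0) - (if w j = s then 1 else 0) else 0

variable {k w}

lemma sum_cycleShift_right [Fintype Θ] (i : ι) : ∑ s, cycleShift k w i s = 0 := by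
  simp only [cycleShift]
  rw [sum_comm]
  simp

lemma sum_cycleShift_left [Fintype ι] (s : Θ) : ∑ i, cycleShift k w i s = 0 := by
  simp only [cycleShift]
  rw [sum_comm]
  simp only [sum_ite_eq, mem_univ, if_true, sum_sub_distrib]
  rw [sub_eq_zero]
  exact (Equiv.subRight (1 : Fin n)).sum_comp fun j => if w j = s then (1 : ℝ) else 0

lemma sum_sum_cycleShift_mul [Fintype ι] [Fintype Θ] (c : ι → Θ → ℝ) :
    ∑ i, ∑ s, cycleShift k w i s * c i s = ∑ j, (c (k j) (w (j - 1)) - c (k j) (w j)) := by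
  simp only [cycleShift, sum_mul]
  rw [sum_congr rfl fun i _ => sum_comm, sum_comm]
  refine sum_congr rfl fun j _ => ?_
  simp [ite_mul, sub_mul]

lemma neg_card_le_cycleShift (i : ι) (s : Θ) :
    -(#{j | k j = i ∧ w j = s} : ℝ) ≤ cycleShift k w i s := by
  rw [← sum_boole, ← sum_neg_distrib]
  refine sum_le_sum fun j _ => ?_
  split_ifs <;> simp_all

end CycleShift

section Improvement

variable {Θ X : Type*} [Fintype Θ] [Fintype X] {u : X × Θ → ℝ}
  {x : Θ → X → ℝ} {K : ℕ} {θv : Fin K → Θ} {q : Θ → ℝ} {r : Fin K → Θ → ℝ}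

lemma payoff_eq_sum :
    payoff u x K θv r = (∑ k, ∑ s, r k s * ubar u (x s) (θv k)) / K := by
  simp only [payoff, ubar_liftSCF]

lemma Feasible.add_smul_cycleShift [DecidableEq Θ] (hr : Feasible K q r) {n : ℕ} [NeZero n]
    {k : Fin n → Fin K} {w : Fin n → Θ} {ε : ℝ} (hε : 0 ≤ ε)
    (hεr : ∀ j, n * ε ≤ r (k j) (w j)) :
    Feasible K q fun i s => r i s + ε * cycleShift k w i s := by
  refine ⟨fun i => ⟨fun s => ?_, ?_⟩, fun s => ?_⟩
  · have hshift := neg_card_le_cycleShift (k := k) (w := w) i s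
    by_cases h : ∃ j, k j = i ∧ w j = s
    · obtain ⟨j, rfl, rfl⟩ := h
      have hcard : (#{j' | k j' = k j ∧ w j' = w j} : ℝ) ≤ n := by
        exact_mod_cast (card_le_univ _).trans_eq (Fintype.card_fin n)
      nlinarith [hεr j]
    · rw [filter_false_of_mem fun j _ hj => h ⟨j, hj⟩, card_empty, Nat.cast_zero,
        neg_zero] at hshift
      nlinarith [(hr.1 i).1 s]
  · rw [sum_add_distrib, ← mul_sum, sum_cycleShift_right, mul_zero, add_zero, (hr.1 i).2]
  · rw [sum_add_distrib, ← mul_sum, sum_cycleShift_left, mul_zero, add_zero, hr.2 s]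

lemma payoff_add_smul_cycleShift [DecidableEq Θ] {n : ℕ} [NeZero n] (k : Fin n → Fin K)
    (w : Fin n → Θ) (ε : ℝ) :
    payoff u x K θv (fun i s => r i s + ε * cycleShift k w i s) = payoff u x K θv r +
      ε * (∑ j, (ubar u (x (w (j - 1))) (θv (k j)) - ubar u (x (w j)) (θv (k j)))) / K := by
  simp only [payoff_eq_sum, add_mul, sum_add_distrib, mul_assoc, ← mul_sum, add_div]
  rw [sum_sum_cycleShift_mul fun i s => ubar u (x s) (θv i)]

lemma exists_payoff_lt_of_cycle [DecidableEq Θ] (hcm : StrictCyclMonoSCF u x)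
    (hr : Feasible K q r) {J : ℕ} (k : Fin (J + 2) → Fin K) (w : Fin (J + 2) → Θ)
    (hpos : ∀ j, 0 < r (k j) (w j)) (hw : ∀ j, x (w j) = x (θv (k (j + 1))))
    (hdist : ∀ j j', j ≠ j' → x (θv (k j)) ≠ x (θv (k j'))) :
    ∃ r', Feasible K q r' ∧ payoff u x K θv r < payoff u x K θv r' := by
  set m := univ.inf' univ_nonempty fun j => r (k j) (w j)
  have hm : 0 < m := (lt_inf'_iff _).mpr fun j _ => hpos j
  have hεr (j : Fin (J + 2)) : ((J + 2 : ℕ) : ℝ) * (m / (J + 2 : ℕ)) ≤ r (k j) (w j) := by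
    rw [mul_div_cancel₀ _ (by positivity)]
    exact inf'_le _ (mem_univ j)
  refine ⟨_, hr.add_smul_cycleShift (by positivity) hεr, ?_⟩
  have hK : (0 : ℝ) < K := by exact_mod_cast (k 0).pos
  have hgain : 0 < ∑ j, (ubar u (x (w (j - 1))) (θv (k j)) - ubar u (x (w j)) (θv (k j))) := by
    have := hcm J (θv ∘ k) hdist
    simp only [hw, sub_add_cancel, sum_sub_distrib, Function.comp_apply] at this ⊢
    linarith
  rw [payoff_add_smul_cycleShift]
  have : 0 < m / (J + 2 : ℕ) * _ / K := div_pos (mul_pos (by positivity) hgain) hK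
  linarith

end Improvement

lemma isAcyclicFlow_pushFlow_reportPlan {Θ X : Type*} [Fintype Θ] [Fintype X] [DecidableEq Θ]
    {u : X × Θ → ℝ} {x : Θ → X → ℝ} (hcm : StrictCyclMonoSCF u x) {q : Θ → ℝ} {K : ℕ}
    {θv : Fin K → Θ} {r : Fin K → Θ → ℝ} (hr : Feasible K q r)
    (hropt : ∀ r', Feasible K q r' → payoff u x K θv r' ≤ payoff u x K θv r) :
    IsAcyclicFlow (pushFlow x (reportPlan K θv r)) := by
  intro J c hc
  by_contra! hpos
  choose t s hxt hxs hts using fun j => exists_pos_of_pushFlow_pos (hpos j)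
  choose k hk hks using fun j => exists_pos_of_reportPlan_pos (hts j)
  have hw (j : Fin (J + 2)) : x (s j) = x (θv (k (j + 1))) := by rw [hxs, hk, hxt]
  have hdist (j j' : Fin (J + 2)) (hjj' : j ≠ j') : x (θv (k j)) ≠ x (θv (k j')) := by
    rw [hk, hk, hxt, hxt]
    exact hc.ne hjj'
  obtain ⟨r', hr', hlt⟩ := exists_payoff_lt_of_cycle hcm hr k s hks hw hdist
  exact (hropt r' hr').not_gt hlt

theorem quota_expost_bound_every_best_response_general {Θ X : Type*} [Fintype Θ] [Fintype X]
    [Nonempty Θ] [DecidableEq Θ]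
    (u : X × Θ → ℝ) (x : Θ → X → ℝ) (hx : ∀ θ, IsProbVec (x θ))
    (hcm : StrictCyclMonoSCF u x)
    (q : Θ → ℝ) (K : ℕ) (θv : Fin K → Θ)
    (r : Fin K → Θ → ℝ) (hr : Feasible K q r)
    (hropt : ∀ r' : Fin K → Θ → ℝ, Feasible K q r' →
      payoff u x K θv r' ≤ payoff u x K θv r) :
    (∑ k, tv (liftSCF x (r k)) (x (θv k))) / K ≤
      ((Fintype.card Θ : ℝ) - 1) * tv q (marg K θv) := by
  have hmass : ∑ t, marg K θv t = ∑ s, q s := by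
    simp only [← sum_reportPlan_right hr.1, ← sum_reportPlan_left (θv := θv) hr]
    exact sum_comm
  have hcard : (#(univ.image x) : ℝ) ≤ Fintype.card Θ := by exact_mod_cast card_image_le
  have hcard' : (1 : ℝ) ≤ Fintype.card Θ := by exact_mod_cast Fintype.card_pos
  calc (∑ k, tv (liftSCF x (r k)) (x (θv k))) / K
      ≤ (∑ k, ∑ s with x s ≠ x (θv k), r k s) / K := by
        gcongr with k
        exact tv_liftSCF_le_sum_ne hx (hr.1 k) (θv k)
    _ = ∑ b ∈ univ.image x, ∑ a ∈ univ.image x, pushFlow x (reportPlan K θv r) b a := by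
        rw [sum_sum_pushFlow, sum_sum_filter_reportPlan fun t s => x s ≠ x t]
    _ ≤ (#(univ.image x) - 1 : ℝ) * ∑ b ∈ univ.image x,
          max (netOutflow (pushFlow x (reportPlan K θv r)) (univ.image x) b) 0 :=
        (isAcyclicFlow_pushFlow_reportPlan hcm hr hropt).sum_sum_le_card_sub_one_mul
          (pushFlow_nonneg (reportPlan_nonneg hr.1)) pushFlow_self _
    _ ≤ (Fintype.card Θ - 1 : ℝ) * tv (marg K θv) q := by
        gcongr
        simp only [netOutflow_pushFlow, sum_reportPlan_right hr.1, sum_reportPlan_left hr]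
        exact sum_image_max_sum_fiber_sub_le_tv x hmass
    _ = (Fintype.card Θ - 1 : ℝ) * tv q (marg K θv) := by rw [tv_comm]

/-- Ex-post error bound for every best response. If `x` is
strictly cyclically monotone, then EVERY payoff-maximizing feasible report
vector at quota `q` has average decision error at most
`(|Θ| − 1)·‖q − marg θv‖`. -/
theorem quota_expost_bound_every_best_response {Θ X : Type*} [Fintype Θ] [Fintype X]
    [Nonempty Θ] [Nonempty X] [DecidableEq Θ]
    (u : X × Θ → ℝ) (x : Θ → X → ℝ) (hx : ∀ θ, IsProbVec (x θ))
    (hcm : StrictCyclMonoSCF u x)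
    (q : Θ → ℝ) (hq : IsProbVec q) (K : ℕ) (hK : 1 ≤ K) (θv : Fin K → Θ)
    (r : Fin K → Θ → ℝ) (hr : Feasible K q r)
    (hropt : ∀ r' : Fin K → Θ → ℝ, Feasible K q r' →
      payoff u x K θv r' ≤ payoff u x K θv r) :
    (∑ k, tv (liftSCF x (r k)) (x (θv k))) / K ≤
      ((Fintype.card Θ : ℝ) - 1) * tv q (marg K θv) :=
  quota_expost_bound_every_best_response_general u x hx hcm q K θv r hr hropt
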